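/- Let q ∈ (0,1], T a positive integer, ε > 0 with ε < 2·log(1/δ) for δ ∈ (0,1), and set α = 1 + 2·log(1/δ)/ε. If σ² ≥ 7·q²·T·(ε + 2·log(1/δ))/ε², then 3.5·q²·T·α/σ² + log(1/δ)/(α − 1) ≤ ε. -/

import Mathlib

/-! The order `α` is chosen so that the conversion term `log (1/δ) / (α - 1)` is exactly `ε / 2`,
and the lower bound on `σ²` is what makes the accumulated RDP term at most the other `ε / 2`. -/

lemma div_two_mul_div_eq_half {L : ℝ} (hL : L ≠ 0) (ε : ℝ) : L / (2 * L / ε) = ε / 2 := by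
  rw [div_div_eq_mul_div, mul_comm L, mul_div_mul_right ε 2 hL]

lemma div_le_half_of_two_mul_div_le {a ε σ2 : ℝ} (ha : 0 ≤ a) (hε : 0 < ε)
    (hσ : 2 * a / ε ≤ σ2) : a / σ2 ≤ ε / 2 := by
  have hσ0 : 0 ≤ σ2 := (by positivity : 0 ≤ 2 * a / ε).trans hσ
  refine div_le_of_le_mul₀ hσ0 (by positivity) ?_
  rw [div_le_iff₀ hε] at hσ
  linarith

theorem stmt3_general (q : ℝ) (T : ℕ)
    (ε δ σ2 : ℝ) (hε : 0 < ε)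
    (hεδ : ε < 2 * Real.log (1 / δ))
    (α : ℝ) (hα : α = 1 + 2 * Real.log (1 / δ) / ε)
    (hσ : σ2 ≥ 7 * q ^ 2 * T * (ε + 2 * Real.log (1 / δ)) / ε ^ 2) :
    3.5 * q ^ 2 * T * α / σ2 + Real.log (1 / δ) / (α - 1) ≤ ε := by
  set L := Real.log (1 / δ)
  have hL : 0 < L := by linarith
  have hα0 : 0 ≤ α := by rw [hα]; positivity
  have hnoise : 3.5 * q ^ 2 * T * α / σ2 ≤ ε / 2 := by
    refine div_le_half_of_two_mul_div_le (by positivity) hε (le_of_eq_of_le ?_ hσ)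
    rw [hα]
    field_simp
    ring
  have hconv : L / (α - 1) = ε / 2 := by
    rw [hα, add_sub_cancel_left, div_two_mul_div_eq_half hL.ne']
  linarith

theorem stmt3 (q : ℝ) (hq : q ∈ Set.Ioc (0 : ℝ) 1) (T : ℕ) (hT : 0 < T)
    (ε δ σ2 : ℝ) (hε : 0 < ε) (hδ : δ ∈ Set.Ioo (0 : ℝ) 1)
    (hεδ : ε < 2 * Real.log (1 / δ))
    (α : ℝ) (hα : α = 1 + 2 * Real.log (1 / δ) / ε)
    (hσ : σ2 ≥ 7 * q ^ 2 * T * (ε + 2 * Real.log (1 / δ)) / ε ^ 2) :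
    3.5 * q ^ 2 * T * α / σ2 + Real.log (1 / δ) / (α - 1) ≤ ε :=
  stmt3_general q T ε δ σ2 hε hεδ α hα hσ
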